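/- (Near-field estimate for the fractional-order asymmetry.) Define γ_{a,2}(x,y) := (1/2) φ(y,x) |x−y|^{−n} (|x−y|^{−2s(x,y)} − |x−y|^{−2s(y,x)}) for |x−y| ≤ δ and 0 otherwise, and β(r) := sup{|s(x,y)−s(y,x)| : x,y ∈ D, |x−y| ≤ r}. If ∫₀¹ (β(r)|log r|)² r^{−1−2s̄} dr < ∞, then sup_{x∈D} ∫_{{y ∈ D : |x−y| ≤ δ̲, γ_s(x,y) ≠ 0}} γ_{a,2}(x,y)² / γ_s(x,y) dy < ∞. -/

import Mathlib

open MeasureTheory ENNReal Set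

noncomputable section

/-- Points of `ℝⁿ`. -/
abbrev Pt (n : ℕ) := EuclideanSpace ℝ (Fin n)

/-- The interaction domain `Ω_I`: points outside `Ω` that interact with points of `Ω`
(within distance `δ ∈ (0,∞]`). -/
def interactionDomain {n : ℕ} (Ω : Set (Pt n)) (δ : ℝ≥0∞) : Set (Pt n) :=
  {y | y ∉ Ω ∧ ∃ x ∈ Ω, ENNReal.ofReal (dist x y) ≤ δ}

/-- The variable-order fractional kernel
`γ(x,y) = φ(x,y) |x-y|^(-n-2 s(x,y)) 1_{|x-y| ≤ δ}`. -/
def ker {n : ℕ} (s φ : Pt n → Pt n → ℝ) (δ : ℝ≥0∞) (x y : Pt n) : ℝ :=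
  if ENNReal.ofReal (dist x y) ≤ δ then φ x y * dist x y ^ (-((n : ℝ) + 2 * s x y)) else 0

/-- Symmetric part `γ_s` of the kernel. -/
def kerSym {n : ℕ} (s φ : Pt n → Pt n → ℝ) (δ : ℝ≥0∞) (x y : Pt n) : ℝ :=
  (ker s φ δ x y + ker s φ δ y x) / 2

/-- Antisymmetric part `γ_a` of the kernel. -/
def kerAnti {n : ℕ} (s φ : Pt n → Pt n → ℝ) (δ : ℝ≥0∞) (x y : Pt n) : ℝ :=
  (ker s φ δ x y - ker s φ δ y x) / 2

/-- The squared energy seminorm `[v]² = ∬_{D×D} (v(x)-v(y))² γ_s(x,y) dx dy`. -/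
def energySq {n : ℕ} (s φ : Pt n → Pt n → ℝ) (δ : ℝ≥0∞) (D : Set (Pt n))
    (v : Pt n → ℝ) : ℝ≥0∞ :=
  ∫⁻ x in D, ∫⁻ y in D, ENNReal.ofReal ((v x - v y) ^ 2 * kerSym s φ δ x y)

/-- The energy space `H̃`: measurable, square integrable on `D = Ω ∪ Ω_I`, finite energy,
and vanishing a.e. on `Ω_I`. -/
def tildeH {n : ℕ} (s φ : Pt n → Pt n → ℝ) (δ : ℝ≥0∞) (Ω ΩI : Set (Pt n)) :
    Set (Pt n → ℝ) :=
  {v | Measurable v ∧ MemLp v 2 (volume.restrict (Ω ∪ ΩI)) ∧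
    energySq s φ δ (Ω ∪ ΩI) v < ⊤ ∧ v =ᵐ[volume.restrict ΩI] 0}

/-- The bilinear form `A(u,v) = ∬_{D×D} γ(x,y) v(x) (u(x)-u(y)) dy dx`. -/
def biForm {n : ℕ} (s φ : Pt n → Pt n → ℝ) (δ : ℝ≥0∞) (D : Set (Pt n))
    (u v : Pt n → ℝ) : ℝ :=
  ∫ x in D, ∫ y in D, ker s φ δ x y * v x * (u x - u y)

/-- `β(r) = sup { |s(x,y) - s(y,x)| : x,y ∈ D, |x-y| ≤ r }`. -/
def betaFn {n : ℕ} (s : Pt n → Pt n → ℝ) (D : Set (Pt n)) (r : ℝ) : ℝ :=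
  sSup {t | ∃ x ∈ D, ∃ y ∈ D, dist x y ≤ r ∧ t = |s x y - s y x|}

/-- `γ_{a,2}(x,y) = (1/2) φ(y,x) |x-y|^{-n} (|x-y|^{-2s(x,y)} - |x-y|^{-2s(y,x)})` for
`|x-y| ≤ δ`, else `0`. -/
def kerA2 {n : ℕ} (s φ : Pt n → Pt n → ℝ) (δ : ℝ≥0∞) (x y : Pt n) : ℝ :=
  if ENNReal.ofReal (dist x y) ≤ δ then
    φ y x / 2 * dist x y ^ (-(n : ℝ)) *
      (dist x y ^ (-(2 * s x y)) - dist x y ^ (-(2 * s y x))) else 0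

/-! For `0 < r = |x - y| ≤ 1` write `m = max (s(x,y), s(y,x))`. The larger of the two terms of
`γ_s(x,y)` is `≍ r^{-n-2m}`, while the mean value bound `|r^a - r^b| ≤ |a - b| |log r| r^{min a b}`
gives `|γ_{a,2}(x,y)| ≲ β(r) |log r| r^{-n-2m}`. Hence `γ_{a,2}²/γ_s ≲ (β(r) |log r|)² r^{-n-2s̄}`,
a radial function whose integral over the unit ball is, in polar coordinates, the assumed
finite integral `∫₀¹ (β(r) |log r|)² r^{-1-2s̄} dr`. -/

lemma abs_rpow_sub_rpow_le_of_le_one {r : ℝ} (hr : 0 < r) (hr1 : r ≤ 1) (a b : ℝ) :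
    |r ^ a - r ^ b| ≤ |a - b| * |Real.log r| * r ^ min a b := by
  wlog hab : a ≤ b generalizing a b
  · rw [abs_sub_comm, abs_sub_comm a b, min_comm]
    exact this b a (le_of_not_ge hab)
  have hlog : |Real.log r| = -Real.log r := abs_of_nonpos (Real.log_nonpos hr.le hr1)
  have hsplit : r ^ b = r ^ a * r ^ (b - a) := by rw [← Real.rpow_add hr, add_sub_cancel]
  have hexp : 1 - r ^ (b - a) ≤ (b - a) * -Real.log r := by
    have := Real.add_one_le_exp (Real.log r * (b - a))
    rw [Real.rpow_def_of_pos hr]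
    linarith
  rw [abs_of_nonneg (Real.rpow_le_rpow_of_exponent_ge hr hr1 hab |> sub_nonneg.mpr),
    abs_of_nonpos (sub_nonpos.mpr hab), min_eq_left hab, hlog, hsplit]
  calc r ^ a - r ^ a * r ^ (b - a) = r ^ a * (1 - r ^ (b - a)) := by ring
    _ ≤ r ^ a * ((b - a) * -Real.log r) :=
        mul_le_mul_of_nonneg_left hexp (Real.rpow_nonneg hr.le a)
    _ = -(a - b) * -Real.log r * r ^ a := by ring

lemma mul_rpow_neg_max_le_add {r ν a b p q c : ℝ} (hr : 0 ≤ r) (hc : 0 ≤ c)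
    (hp : c ≤ p) (hq : c ≤ q) :
    c * r ^ (-(ν + 2 * max a b)) ≤ p * r ^ (-(ν + 2 * a)) + q * r ^ (-(ν + 2 * b)) := by
  have hpa : 0 ≤ p * r ^ (-(ν + 2 * a)) := mul_nonneg (hc.trans hp) (Real.rpow_nonneg hr _)
  have hqb : 0 ≤ q * r ^ (-(ν + 2 * b)) := mul_nonneg (hc.trans hq) (Real.rpow_nonneg hr _)
  rcases le_total b a with hba | hab
  · rw [max_eq_left hba]
    linarith [mul_le_mul_of_nonneg_right hp (Real.rpow_nonneg hr (-(ν + 2 * a)))]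
  · rw [max_eq_right hab]
    linarith [mul_le_mul_of_nonneg_right hq (Real.rpow_nonneg hr (-(ν + 2 * b)))]

lemma abs_mul_rpow_sub_rpow_le {r ν a b q C : ℝ} (hr : 0 < r) (hr1 : r ≤ 1) (hq : 0 ≤ q)
    (hqC : q ≤ C) :
    |q / 2 * r ^ (-ν) * (r ^ (-(2 * a)) - r ^ (-(2 * b)))| ≤
      C * (|a - b| * |Real.log r|) * r ^ (-(ν + 2 * max a b)) := by
  have hC : 0 ≤ C := hq.trans hqC
  have hdiff := abs_rpow_sub_rpow_le_of_le_one hr hr1 (-(2 * a)) (-(2 * b))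
  rw [show -(2 * a) - -(2 * b) = -2 * (a - b) by ring, abs_mul, abs_neg, abs_two,
    min_neg_neg, ← mul_max_of_nonneg _ _ zero_le_two] at hdiff
  have hsplit : r ^ (-(ν + 2 * max a b)) = r ^ (-ν) * r ^ (-(2 * max a b)) := by
    rw [← Real.rpow_add hr, neg_add]
  rw [abs_mul, abs_mul, abs_of_nonneg (Real.rpow_nonneg hr.le _), abs_of_nonneg (by positivity),
    hsplit]
  calc q / 2 * r ^ (-ν) * |r ^ (-(2 * a)) - r ^ (-(2 * b))|
      ≤ C / 2 * r ^ (-ν) * (2 * |a - b| * |Real.log r| * r ^ (-(2 * max a b))) := by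
        gcongr
    _ = C * (|a - b| * |Real.log r|) * (r ^ (-ν) * r ^ (-(2 * max a b))) := by ring

lemma sq_mul_rpow_sub_rpow_div_le {r ν a b p q c C σ : ℝ} (hr : 0 < r) (hr1 : r ≤ 1)
    (hc : 0 < c) (hp : c ≤ p) (hq : c ≤ q) (hqC : q ≤ C) (ha : a ≤ σ) (hb : b ≤ σ) :
    (q / 2 * r ^ (-ν) * (r ^ (-(2 * a)) - r ^ (-(2 * b)))) ^ 2 /
        ((p * r ^ (-(ν + 2 * a)) + q * r ^ (-(ν + 2 * b))) / 2) ≤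
      2 * C ^ 2 / c * (|a - b| * |Real.log r|) ^ 2 * r ^ (-(ν + 2 * σ)) := by
  set R := r ^ (-(ν + 2 * max a b))
  have hR : 0 < R := Real.rpow_pos_of_pos hr _
  have hnum := abs_mul_rpow_sub_rpow_le (ν := ν) (a := a) (b := b) hr hr1 (hc.le.trans hq) hqC
  have hden := mul_rpow_neg_max_le_add (ν := ν) (a := a) (b := b) hr.le hc.le hp hq
  have hC : 0 ≤ C := hc.le.trans (hq.trans hqC)
  calc _ ≤ (C * (|a - b| * |Real.log r|) * R) ^ 2 / (c * R / 2) := by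
        rw [← sq_abs]
        gcongr
    _ = 2 * C ^ 2 / c * (|a - b| * |Real.log r|) ^ 2 * R := by
        field_simp
    _ ≤ 2 * C ^ 2 / c * (|a - b| * |Real.log r|) ^ 2 * r ^ (-(ν + 2 * σ)) := by
        gcongr
        exact Real.rpow_le_rpow_of_exponent_ge hr hr1 (by linarith [max_le ha hb])

section Beta

variable {n : ℕ} {s : Pt n → Pt n → ℝ} {D : Set (Pt n)} {slo shi : ℝ}

lemma bddAbove_betaFn_set (hs : ∀ x ∈ D, ∀ y ∈ D, slo ≤ s x y ∧ s x y ≤ shi) (r : ℝ) :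
    BddAbove {t | ∃ x ∈ D, ∃ y ∈ D, dist x y ≤ r ∧ t = |s x y - s y x|} := by
  refine ⟨shi - slo, ?_⟩
  rintro t ⟨x, hx, y, hy, -, rfl⟩
  have hxy := hs x hx y hy
  have hyx := hs y hy x hx
  rw [abs_sub_le_iff]
  constructor <;> linarith

lemma betaFn_nonneg (r : ℝ) : 0 ≤ betaFn s D r :=
  Real.sSup_nonneg <| by
    rintro t ⟨x, -, y, -, -, rfl⟩
    exact abs_nonneg _

lemma abs_sub_le_betaFn (hs : ∀ x ∈ D, ∀ y ∈ D, slo ≤ s x y ∧ s x y ≤ shi) {x y : Pt n}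
    (hx : x ∈ D) (hy : y ∈ D) : |s x y - s y x| ≤ betaFn s D (dist x y) :=
  le_csSup (bddAbove_betaFn_set hs _) ⟨x, hx, y, hy, le_rfl, rfl⟩

lemma betaFn_monotone (hs : ∀ x ∈ D, ∀ y ∈ D, slo ≤ s x y ∧ s x y ≤ shi) :
    Monotone (betaFn s D) := by
  intro r₁ r₂ hr
  rcases Set.eq_empty_or_nonempty
    {t | ∃ x ∈ D, ∃ y ∈ D, dist x y ≤ r₁ ∧ t = |s x y - s y x|} with hempty | hne
  · rw [betaFn, hempty, Real.sSup_empty]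
    exact betaFn_nonneg r₂
  · refine csSup_le_csSup (bddAbove_betaFn_set hs r₂) hne ?_
    rintro t ⟨x, hx, y, hy, hxy, rfl⟩
    exact ⟨x, hx, y, hy, hxy.trans hr, rfl⟩

end Beta

def radialMajorant (c ν σ : ℝ) (β : ℝ → ℝ) (r : ℝ) : ℝ≥0∞ :=
  (Ioc 0 1).indicator
    (fun r => ENNReal.ofReal (c * (β r * |Real.log r|) ^ 2 * r ^ (-(ν + 2 * σ)))) r

lemma measurable_radialMajorant {c ν σ : ℝ} {β : ℝ → ℝ} (hβ : Measurable β) :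
    Measurable (radialMajorant c ν σ β) :=
  Measurable.indicator (by fun_prop) measurableSet_Ioc

lemma kerA2_self {n : ℕ} (s φ : Pt n → Pt n → ℝ) (δ : ℝ≥0∞) (x : Pt n) :
    kerA2 s φ δ x x = 0 := by
  simp [kerA2]

lemma ofReal_kerA2_sq_div_kerSym_le {n : ℕ} {δ : ℝ≥0∞} {s φ : Pt n → Pt n → ℝ}
    {slo shi φlo φhi : ℝ} (hφlo : 0 < φlo) {D : Set (Pt n)}
    (hs : ∀ x ∈ D, ∀ y ∈ D, slo ≤ s x y ∧ s x y ≤ shi)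
    (hφ : ∀ x ∈ D, ∀ y ∈ D, φlo ≤ φ x y ∧ φ x y ≤ φhi)
    {x y : Pt n} (hx : x ∈ D) (hy : y ∈ D) (hxy : ENNReal.ofReal (dist x y) ≤ min δ 1) :
    ENNReal.ofReal (kerA2 s φ δ x y ^ 2 / kerSym s φ δ x y) ≤
      radialMajorant (2 * φhi ^ 2 / φlo) n shi (betaFn s D) (dist x y) := by
  rcases (dist_nonneg (x := x) (y := y)).eq_or_lt with h0 | hpos
  · rw [dist_eq_zero.mp h0.symm, kerA2_self]
    simp
  have hr1 : dist x y ≤ 1 := ENNReal.ofReal_le_one.mp (hxy.trans (min_le_right _ _))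
  have hrδ : ENNReal.ofReal (dist x y) ≤ δ := hxy.trans (min_le_left _ _)
  rw [radialMajorant, indicator_of_mem (show dist x y ∈ Ioc 0 1 from ⟨hpos, hr1⟩)]
  refine ENNReal.ofReal_le_ofReal ?_
  simp only [kerA2, kerSym, ker, dist_comm y x, if_pos hrδ]
  calc _ ≤ 2 * φhi ^ 2 / φlo * (|s x y - s y x| * |Real.log (dist x y)|) ^ 2 *
        dist x y ^ (-((n : ℝ) + 2 * shi)) :=
        sq_mul_rpow_sub_rpow_div_le hpos hr1 hφlo (hφ x hx y hy).1 (hφ y hy x hx).1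
          (hφ y hy x hx).2 (hs x hx y hy).2 (hs y hy x hx).2
    _ ≤ _ := by
        gcongr
        exact abs_sub_le_betaFn hs hx hy

section Polar

variable {E : Type*} [NormedAddCommGroup E] [MeasurableSpace E] [BorelSpace E]

lemma lintegral_fun_dist_eq_lintegral_fun_norm (μ : Measure E) [μ.IsAddLeftInvariant]
    (f : ℝ → ℝ≥0∞) (x : E) : ∫⁻ y, f (dist x y) ∂μ = ∫⁻ z, f ‖z‖ ∂μ := by
  simp_rw [dist_comm x, dist_eq_norm, sub_eq_neg_add]
  exact lintegral_add_left_eq_self (fun z => f ‖z‖) (-x)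

variable [NormedSpace ℝ E] [FiniteDimensional ℝ E] [Nontrivial E] (μ : Measure E) [μ.IsAddHaarMeasure]

lemma lintegral_fun_norm_addHaar {f : ℝ → ℝ≥0∞} (hf : Measurable f) :
    ∫⁻ x, f ‖x‖ ∂μ = μ.toSphere univ *
      ∫⁻ r in Ioi (0 : ℝ), ENNReal.ofReal (r ^ (Module.finrank ℝ E - 1)) * f r := by
  have hf_snd : Measurable fun p : Metric.sphere (0 : E) 1 × Ioi (0 : ℝ) => f p.2 :=
    hf.comp (measurable_subtype_coe.comp measurable_snd)
  calc ∫⁻ x, f ‖x‖ ∂μ = ∫⁻ x : ({0}ᶜ : Set E), f ‖(x : E)‖ ∂(μ.comap (↑)) := by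
        rw [lintegral_subtype_comap (measurableSet_singleton 0).compl (fun x : E => f ‖x‖),
          restrict_compl_singleton]
    _ = ∫⁻ p : Metric.sphere (0 : E) 1 × Ioi (0 : ℝ), f p.2
          ∂(μ.toSphere.prod (Measure.volumeIoiPow (Module.finrank ℝ E - 1))) := by
        rw [← (Measure.measurePreserving_homeomorphUnitSphereProd μ).lintegral_comp hf_snd]
        simp
    _ = μ.toSphere univ *
          ∫⁻ r : Ioi (0 : ℝ), f r ∂(Measure.volumeIoiPow (Module.finrank ℝ E - 1)) := by
        rw [lintegral_prod _ hf_snd.aemeasurable]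
        simp [lintegral_const, mul_comm]
    _ = _ := by
        rw [Measure.volumeIoiPow, lintegral_withDensity_eq_lintegral_mul _
          (measurable_subtype_coe.pow_const _).ennreal_ofReal
          (show Measurable fun r : Ioi (0 : ℝ) => f r from hf.comp measurable_subtype_coe)]
        exact congrArg _ (lintegral_subtype_comap measurableSet_Ioi
          (fun r => ENNReal.ofReal (r ^ (Module.finrank ℝ E - 1)) * f r))

lemma lintegral_radialMajorant_norm_lt_top {c σ : ℝ} {β : ℝ → ℝ} (hβ : Measurable β)
    (h : ∫⁻ r in Ioo (0 : ℝ) 1,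
      ENNReal.ofReal ((β r * |Real.log r|) ^ 2 * r ^ (-1 - 2 * σ)) < ⊤) :
    ∫⁻ z, radialMajorant c (Module.finrank ℝ E) σ β ‖z‖ ∂μ < ⊤ := by
  set d := Module.finrank ℝ E
  have hd : 1 ≤ d := Module.finrank_pos
  have hpolar : ∀ r ∈ Ioi (0 : ℝ), ENNReal.ofReal (r ^ (d - 1)) * radialMajorant c d σ β r =
      (Ioc 0 1).indicator (fun r => ENNReal.ofReal c *
        ENNReal.ofReal ((β r * |Real.log r|) ^ 2 * r ^ (-1 - 2 * σ))) r := by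
    intro r (hr : 0 < r)
    by_cases hr1 : r ∈ Ioc 0 1
    · rw [radialMajorant, indicator_of_mem hr1, indicator_of_mem hr1,
        ← ENNReal.ofReal_mul (by positivity), ← ENNReal.ofReal_mul' (by positivity),
        ← Real.rpow_natCast, Nat.cast_sub hd, Nat.cast_one]
      congr 1
      rw [show -1 - 2 * σ = ((d : ℝ) - 1) + -((d : ℝ) + 2 * σ) by ring, Real.rpow_add hr]
      ring
    · simp [radialMajorant, hr1]
  rw [lintegral_fun_norm_addHaar μ (measurable_radialMajorant hβ),
    setLIntegral_congr_fun measurableSet_Ioi hpolar, setLIntegral_indicator measurableSet_Ioc,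
    inter_eq_left.mpr Ioc_subset_Ioi_self, Measure.restrict_congr_set Ioo_ae_eq_Ioc.symm,
    lintegral_const_mul' _ _ ENNReal.ofReal_ne_top]
  exact ENNReal.mul_lt_top (measure_lt_top _ _) (ENNReal.mul_lt_top ENNReal.ofReal_lt_top h)

end Polar

theorem kerA2_nearfield_bound_general
    (n : ℕ) (hn : 1 ≤ n)
    (δ : ℝ≥0∞)
    (s φ : Pt n → Pt n → ℝ)
    (slo shi φlo φhi : ℝ) (hφlo : 0 < φlo)
    (D : Set (Pt n))
    (hs_bd : ∀ x ∈ D, ∀ y ∈ D, slo ≤ s x y ∧ s x y ≤ shi)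
    (hφ_bd : ∀ x ∈ D, ∀ y ∈ D, φlo ≤ φ x y ∧ φ x y ≤ φhi)
    (hbeta : ∫⁻ r in Set.Ioo (0:ℝ) 1,
        ENNReal.ofReal ((betaFn s D r * |Real.log r|) ^ 2 * r ^ (-1 - 2 * shi)) < ⊤) :
    (⨆ x ∈ D,
      ∫⁻ y in {y ∈ D |
          ENNReal.ofReal (dist x y) ≤ min δ 1 ∧ kerSym s φ δ x y ≠ 0},
        ENNReal.ofReal ((kerA2 s φ δ x y) ^ 2 / kerSym s φ δ x y)) < ⊤ := by
  have : Nontrivial (Pt n) :=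
    Module.nontrivial_of_finrank_pos (R := ℝ) (by rw [finrank_euclideanSpace_fin]; omega)
  set F := radialMajorant (2 * φhi ^ 2 / φlo) n shi (betaFn s D)
  have hβ : Measurable (betaFn s D) := (betaFn_monotone hs_bd).measurable
  have hF : ∫⁻ z : Pt n, F ‖z‖ < ⊤ := by
    have h := lintegral_radialMajorant_norm_lt_top (E := Pt n) volume
      (c := 2 * φhi ^ 2 / φlo) hβ hbeta
    rwa [finrank_euclideanSpace_fin] at h
  refine lt_of_le_of_lt (iSup₂_le fun x hx => ?_) hF
  calc _ ≤ ∫⁻ y in {y ∈ D | ENNReal.ofReal (dist x y) ≤ min δ 1 ∧ kerSym s φ δ x y ≠ 0},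
          F (dist x y) :=
        setLIntegral_mono ((measurable_radialMajorant hβ).comp (measurable_const.dist measurable_id))
          fun y hy => ofReal_kerA2_sq_div_kerSym_le hφlo hs_bd hφ_bd hx hy.1 hy.2.1
    _ ≤ ∫⁻ y, F (dist x y) := setLIntegral_le_lintegral _ _
    _ = ∫⁻ z, F ‖z‖ := lintegral_fun_dist_eq_lintegral_fun_norm volume F x

/-- **Near-field estimate for the fractional-order asymmetry**: if
`∫₀¹ (β(r)|log r|)² r^{-1-2s̄} dr < ∞`, then
`sup_{x∈D} ∫_{y∈D, |x-y|≤δ̲, γ_s(x,y)≠0} γ_{a,2}(x,y)²/γ_s(x,y) dy < ∞`. -/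
theorem kerA2_nearfield_bound
    (n : ℕ) (hn : 1 ≤ n)
    (Ω : Set (Pt n)) (hΩo : IsOpen Ω) (hΩb : Bornology.IsBounded Ω) (hΩne : Ω.Nonempty)
    (δ : ℝ≥0∞) (hδ : 0 < δ)
    (s φ : Pt n → Pt n → ℝ)
    (hs_meas : Measurable (Function.uncurry s)) (hφ_meas : Measurable (Function.uncurry φ))
    (slo shi φlo φhi : ℝ) (hslo : 0 < slo) (hshi : shi < 1) (hφlo : 0 < φlo)
    (D : Set (Pt n)) (hD : D = Ω ∪ interactionDomain Ω δ)
    (hs_bd : ∀ x ∈ D, ∀ y ∈ D, slo ≤ s x y ∧ s x y ≤ shi)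
    (hφ_bd : ∀ x ∈ D, ∀ y ∈ D, φlo ≤ φ x y ∧ φ x y ≤ φhi)
    (hbeta : ∫⁻ r in Set.Ioo (0:ℝ) 1,
        ENNReal.ofReal ((betaFn s D r * |Real.log r|) ^ 2 * r ^ (-1 - 2 * shi)) < ⊤) :
    (⨆ x ∈ D,
      ∫⁻ y in {y ∈ D |
          ENNReal.ofReal (dist x y) ≤ min δ 1 ∧ kerSym s φ δ x y ≠ 0},
        ENNReal.ofReal ((kerA2 s φ δ x y) ^ 2 / kerSym s φ δ x y)) < ⊤ :=
  kerA2_nearfield_bound_general n hn δ s φ slo shi φlo φhi hφlo D hs_bd hφ_bd hbeta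

end
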